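/- arXiv:1009.2460 — 5 statements merged into one kernel-verified Lean document; each statement's English description precedes it below -/
import Mathlib

section
/- Let A be a ring, α ∈ A a non-zero-divisor, M_0, M_1, …, M_r A-modules, and φ : M_1 × ⋯ × M_r → M_0 an A-multilinear map. Let n ≥ 1 and suppose given elements y_{i,0},…,y_{i,n−1} and w_{i,0},…,w_{i,n} of M_i for each 1 ≤ i ≤ r, satisfying w_{i,j+1} = w_{i,j} + α·y_{i,j} for all i and all 0 ≤ j ≤ n−1. Then Σ_{i=1}^r Σ_{j=0}^{n−1} φ(w_{1,j+1},…,w_{i−1,j+1}, y_{i,j}, w_{i+1,j},…,w_{r,j}) = Σ_{i=1}^r Σ_{j=0}^{n−1} φ(w_{1,n},…,w_{i−1,n}, y_{i,j}, w_{i+1,0},…,w_{r,0}). -/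
/-!
After multiplying by `α`, the summand with index `(i, j)` becomes
`φ(…, w_{i,j+1}, …) - φ(…, w_{i,j}, …)`, so both double sums telescope to
`φ(w_{•,n}) - φ(w_{•,0})`: the left one first along `i` and then along `j`, the right one first
along `j` and then along `i`. This proves the identity whenever `α` acts injectively on `M₀`.
In general, the data are the image of a universal instance: free modules on the generators
`w_{i,0}`, `y_{i,j}`, mapped by the product of coordinates into a free module, on which the
non-zero-divisor `α` acts injectively; the identity there is pushed forward along a linear map.
-/

open Finset Function

theorem Fin.sum_succ_sub_castSucc {G : Type*} [AddCommGroup G] {n : ℕ} (f : Fin (n + 1) → G) :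
    ∑ j : Fin n, (f j.succ - f j.castSucc) = f (Fin.last n) - f 0 := by
  induction n with
  | zero => simp
  | succ n ih =>
    rw [Fin.sum_univ_castSucc]
    simp only [Fin.succ_castSucc]
    rw [ih fun j => f j.castSucc, Fin.succ_last, Fin.castSucc_zero]
    abel

namespace MultilinearMap

section MixedSum

variable {A : Type*} [Semiring A] {ι : Type*} [Fintype ι] [LinearOrder ι] {n : ℕ}
  {M N : ι → Type*} {M₀ P : Type*}

section AddCommMonoid

variable [∀ i, AddCommMonoid (M i)] [∀ i, AddCommMonoid (N i)] [AddCommMonoid M₀]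
  [AddCommMonoid P] [∀ i, Module A (M i)] [∀ i, Module A (N i)] [Module A M₀] [Module A P]

def mixedSum (φ : MultilinearMap A M M₀) (a b y : ∀ i, Fin n → M i) : M₀ :=
  ∑ i, ∑ j, φ (update (fun k => if k < i then a k j else b k j) i (y i j))

theorem mixedSum_smul (φ : MultilinearMap A M M₀) (a b y : ∀ i, Fin n → M i) (c : A) :
    φ.mixedSum a b (fun i j => c • y i j) = c • φ.mixedSum a b y := by
  simp only [mixedSum, smul_sum, φ.map_update_smul]

theorem mixedSum_compLinearMap (φ : MultilinearMap A M M₀) (ψ : ∀ i, N i →ₗ[A] M i)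
    (a b y : ∀ i, Fin n → N i) :
    (φ.compLinearMap ψ).mixedSum a b y =
      φ.mixedSum (fun i j => ψ i (a i j)) (fun i j => ψ i (b i j)) (fun i j => ψ i (y i j)) := by
  refine sum_congr rfl fun i _ => sum_congr rfl fun j _ => congrArg φ (funext fun k => ?_)
  rw [apply_update (fun k => ψ k)]
  simp only [apply_ite]

theorem mixedSum_compMultilinearMap (L : M₀ →ₗ[A] P) (φ : MultilinearMap A M M₀)
    (a b y : ∀ i, Fin n → M i) :
    (L.compMultilinearMap φ).mixedSum a b y = L (φ.mixedSum a b y) := by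
  simp only [mixedSum, _root_.map_sum, LinearMap.compMultilinearMap_apply]

end AddCommMonoid

variable [∀ i, AddCommGroup (M i)] [AddCommGroup M₀] [∀ i, Module A (M i)] [Module A M₀]

theorem map_sub_map_eq_sum_update (φ : MultilinearMap A M M₀) (a b : ∀ i, M i) :
    φ a - φ b = ∑ i, φ (update (fun k => if k < i then a k else b k) i (a i - b i)) := by
  have h := φ.map_sub_map_piecewise a b univ
  rw [piecewise_univ] at h
  rw [h]
  refine sum_congr rfl fun i _ => congrArg φ (funext fun k => ?_)
  rcases lt_trichotomy k i with h | rfl | h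
  · simp [h, h.ne]
  · simp
  · simp [h.ne', h.not_gt, h.ne]

theorem mixedSum_succ_castSucc_sub (φ : MultilinearMap A M M₀) (w : ∀ i, Fin (n + 1) → M i) :
    φ.mixedSum (fun k j => w k j.succ) (fun k j => w k j.castSucc)
        (fun k j => w k j.succ - w k j.castSucc) =
      φ (fun k => w k (Fin.last n)) - φ (fun k => w k 0) := by
  rw [mixedSum, sum_comm]
  simp_rw [← map_sub_map_eq_sum_update]
  exact Fin.sum_succ_sub_castSucc fun j => φ fun k => w k j

theorem mixedSum_last_zero_sub (φ : MultilinearMap A M M₀) (w : ∀ i, Fin (n + 1) → M i) :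
    φ.mixedSum (fun k _ => w k (Fin.last n)) (fun k _ => w k 0)
        (fun k j => w k j.succ - w k j.castSucc) =
      φ (fun k => w k (Fin.last n)) - φ (fun k => w k 0) := by
  refine (sum_congr rfl fun i _ => ?_).trans (map_sub_map_eq_sum_update φ _ _).symm
  simp only [map_update_sub]
  exact Fin.sum_succ_sub_castSucc fun t => φ (update _ i (w i t))

theorem mixedSum_succ_castSucc_eq_last_zero {α : A} (hα : IsSMulRegular M₀ α)
    (φ : MultilinearMap A M M₀) (y : ∀ i, Fin n → M i) (w : ∀ i, Fin (n + 1) → M i)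
    (hw : ∀ i j, w i j.succ = w i j.castSucc + α • y i j) :
    φ.mixedSum (fun k j => w k j.succ) (fun k j => w k j.castSucc) y =
      φ.mixedSum (fun k _ => w k (Fin.last n)) (fun k _ => w k 0) y := by
  have hy : (fun i j => α • y i j) = fun i j => w i j.succ - w i j.castSucc := by
    simp only [hw, add_sub_cancel_left]
  apply hα
  simp only [← mixedSum_smul, hy, mixedSum_succ_castSucc_sub, mixedSum_last_zero_sub]

end MixedSum

theorem compLinearMap_linearCombination {A : Type*} [CommSemiring A] {ι : Type*} [Fintype ι]
    [DecidableEq ι] {κ : ι → Type*} [∀ i, Fintype (κ i)] {M : ι → Type*} {M₀ : Type*}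
    [∀ i, AddCommMonoid (M i)] [AddCommMonoid M₀] [∀ i, Module A (M i)] [Module A M₀]
    (φ : MultilinearMap A M M₀) (e : ∀ i, κ i → M i) :
    φ.compLinearMap (fun i => Fintype.linearCombination A (e i)) =
      (Fintype.linearCombination A fun p => φ fun i => e i (p i)).compMultilinearMap
        (piFamily fun _ => MultilinearMap.mkPiAlgebra A ι A) := by
  ext v
  simp [Fintype.linearCombination_apply, map_sum, map_smul_univ]

end MultilinearMap

section FreeSteps

variable {A : Type*} [CommSemiring A] {n : ℕ}

/-- The universal solution of `w (j + 1) = w j + α • y j`, in the free module with basis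
`none` (standing for `w 0`) and `some j` (standing for `y j`). -/
def freeSteps (α : A) (n : ℕ) : Fin (n + 1) → Option (Fin n) → A :=
  Fin.induction (Pi.single none 1) fun l v => v + α • Pi.single (some l) 1

theorem freeSteps_succ (α : A) (j : Fin n) :
    freeSteps α n j.succ = freeSteps α n j.castSucc + α • Pi.single (some j) 1 :=
  Fin.induction_succ ..

theorem linearCombination_freeSteps {N : Type*} [AddCommMonoid N] [Module A N] {α : A}
    (y : Fin n → N) (w : Fin (n + 1) → N) (hw : ∀ j, w j.succ = w j.castSucc + α • y j)
    (j : Fin (n + 1)) :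
    Fintype.linearCombination A (fun o => o.elim (w 0) y) (freeSteps α n j) = w j := by
  induction j using Fin.induction with
  | zero => simp [freeSteps]
  | succ j ih => simp [freeSteps_succ, ih, hw]

end FreeSteps

theorem multilinear_telescoping_sum_general (A : Type*) [CommRing A] (α : A)
    (hα : α ∈ nonZeroDivisors A) (r n : ℕ)
    (M : Fin r → Type*) (M₀ : Type*)
    [∀ i, AddCommGroup (M i)] [AddCommGroup M₀] [∀ i, Module A (M i)] [Module A M₀]
    (φ : MultilinearMap A M M₀)
    (y : ∀ i, Fin n → M i) (w : ∀ i, Fin (n + 1) → M i)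
    (hw : ∀ i (j : Fin n), w i j.succ = w i j.castSucc + α • y i j) :
    ∑ i : Fin r, ∑ j : Fin n,
        φ (Function.update (fun k => if k < i then w k j.succ else w k j.castSucc) i (y i j)) =
    ∑ i : Fin r, ∑ j : Fin n,
        φ (Function.update (fun k => if k < i then w k (Fin.last n) else w k 0) i (y i j)) := by
  let e : ∀ i, Option (Fin n) → M i := fun i o => o.elim (w i 0) (y i)
  let Φ : MultilinearMap A (fun _ : Fin r => Option (Fin n) → A) ((Fin r → Option (Fin n)) → A) :=
    MultilinearMap.piFamily fun _ => MultilinearMap.mkPiAlgebra A (Fin r) A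
  have key := congrArg (Fintype.linearCombination A fun p => φ fun i => e i (p i))
    (MultilinearMap.mixedSum_succ_castSucc_eq_last_zero
      (Module.Flat.isSMulRegular_of_nonZeroDivisors hα) Φ (fun _ j => Pi.single (some j) 1)
      (fun _ => freeSteps α n) fun _ => freeSteps_succ α)
  rw [← MultilinearMap.mixedSum_compMultilinearMap, ← MultilinearMap.mixedSum_compMultilinearMap,
    ← MultilinearMap.compLinearMap_linearCombination, MultilinearMap.mixedSum_compLinearMap,
    MultilinearMap.mixedSum_compLinearMap] at key
  simp only [e, linearCombination_freeSteps (y _) (w _) (hw _),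
    Fintype.linearCombination_apply_single, Option.elim_some, one_smul] at key
  exact key

/-- Let `A` be a ring, `α ∈ A` a non-zero-divisor, `M₀, M₁, …, M_r`
`A`-modules and `φ : M₁ × ⋯ × M_r → M₀` an `A`-multilinear map. Given elements
`y_{i,j}` (`0 ≤ j ≤ n−1`) and `w_{i,j}` (`0 ≤ j ≤ n`) of `M_i` with
`w_{i,j+1} = w_{i,j} + α·y_{i,j}`, the two double sums
`Σ_i Σ_j φ(w_{1,j+1},…,w_{i−1,j+1}, y_{i,j}, w_{i+1,j},…,w_{r,j})` and
`Σ_i Σ_j φ(w_{1,n},…,w_{i−1,n}, y_{i,j}, w_{i+1,0},…,w_{r,0})` are equal. -/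
theorem multilinear_telescoping_sum (A : Type*) [CommRing A] (α : A)
    (hα : α ∈ nonZeroDivisors A) (r n : ℕ) (hr : 1 ≤ r) (hn : 1 ≤ n)
    (M : Fin r → Type*) (M₀ : Type*)
    [∀ i, AddCommGroup (M i)] [AddCommGroup M₀] [∀ i, Module A (M i)] [Module A M₀]
    (φ : MultilinearMap A M M₀)
    (y : ∀ i, Fin n → M i) (w : ∀ i, Fin (n + 1) → M i)
    (hw : ∀ i (j : Fin n), w i j.succ = w i j.castSucc + α • y i j) :
    ∑ i : Fin r, ∑ j : Fin n,
        φ (Function.update (fun k => if k < i then w k j.succ else w k j.castSucc) i (y i j)) =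
    ∑ i : Fin r, ∑ j : Fin n,
        φ (Function.update (fun k => if k < i then w k (Fin.last n) else w k 0) i (y i j)) :=
  multilinear_telescoping_sum_general A α hα r n M M₀ φ y w hw
end

section
/- Let k be a field and R an integral domain containing k which is infinite-dimensional as a k-vector space. Let M be a finite free R-module, σ : R → R a ring automorphism with σ(k) = k, and φ : M → M a σ-semilinear map (φ(r·m) = σ(r)·φ(m)) whose cokernel is finite-dimensional as a k-vector space. Then φ is injective. -/
/-- Let `k` be a field, `R` an integral domain containing `k` that is
infinite-dimensional as a `k`-vector space, `M` a finite free `R`-module, `σ : R → R` a ring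
automorphism with `σ(k) = k`, and `φ : M → M` a `σ`-semilinear map whose cokernel is
finite-dimensional over `k`. Then `φ` is injective. -/
theorem semilinear_injective_of_finiteDimensional_coker
    (k : Type*) [Field k] (R : Type*) [CommRing R] [IsDomain R] [Algebra k R]
    (hinf : ¬ FiniteDimensional k R)
    (M : Type*) [AddCommGroup M] [Module R M] [Module k M] [IsScalarTower k R M]
    [Module.Finite R M] [Module.Free R M]
    (σ : R ≃+* R) (hσ : ⇑σ '' Set.range (algebraMap k R) = Set.range (algebraMap k R))
    (φ : M →+ M) (hφ : ∀ (r : R) (m : M), φ (r • m) = σ r • φ m)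
    (hcoker : FiniteDimensional k (M ⧸ Submodule.span R (Set.range φ))) :
    Function.Injective φ := by
  haveI : RingHomSurjective (σ : R →+* R) := ⟨σ.surjective⟩
  -- package `φ` as a semilinear map
  let f : M →ₛₗ[(σ : R →+* R)] M := ⟨⟨⇑φ, φ.map_add⟩, hφ⟩
  have hfφ : ⇑f = ⇑φ := rfl
  set N : Submodule R M := Submodule.span R (Set.range ⇑φ) with hNdef
  have hN : N = LinearMap.range f := by
    rw [hNdef, ← hfφ, ← LinearMap.coe_range, Submodule.span_eq]
  -- Step A: the quotient `M ⧸ N` is a torsion `R`-module, i.e. has rank zero.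
  have hq0 : Module.rank R (M ⧸ N) = 0 := by
    rw [rank_eq_zero_iff]
    intro x
    by_contra h
    push_neg at h
    have hginj : Function.Injective fun r : R => r • x := by
      intro a b hab
      have hsub : (a - b) • x = 0 := by
        simp only at hab
        rw [sub_smul, hab, sub_self]
      by_contra hne
      exact h (a - b) (sub_ne_zero.mpr hne) hsub
    let g : R →ₗ[k] (M ⧸ N) :=
      { toFun := fun r => r • x
        map_add' := fun a b => add_smul a b x
        map_smul' := fun c r => smul_assoc c r x }
    exact hinf (FiniteDimensional.of_injective g hginj)
  -- Step B: hence `rank N = rank M`.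
  have h1 := Submodule.rank_quotient_add_rank N
  rw [hq0, zero_add] at h1
  -- Step C: `M ⧸ ker f` is additively (indeed `σ`-semilinearly) equivalent to `N`.
  have hrq : Module.rank R (M ⧸ LinearMap.ker f) = Module.rank R N := by
    let g : (M ⧸ LinearMap.ker f) →ₛₗ[(σ : R →+* R)] M :=
      Submodule.liftQ (LinearMap.ker f) f le_rfl
    have hginj : Function.Injective g := by
      rw [← LinearMap.ker_eq_bot]
      exact Submodule.ker_liftQ_eq_bot _ _ _ le_rfl
    have hgrange : ∀ y, g y ∈ N := by
      intro y
      obtain ⟨m, rfl⟩ := Submodule.Quotient.mk_surjective _ y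
      rw [hN]
      exact ⟨m, rfl⟩
    have hgsurj : ∀ n : N, ∃ y, g y = (n : M) := by
      rintro ⟨n, hn⟩
      rw [hN] at hn
      obtain ⟨m, rfl⟩ := hn
      exact ⟨Submodule.Quotient.mk m, rfl⟩
    let e' : (M ⧸ LinearMap.ker f) ≃ (N : Submodule R M) :=
      Equiv.ofBijective (fun y => ⟨g y, hgrange y⟩)
        ⟨fun a b hab => hginj (congrArg Subtype.val hab),
         fun n => by obtain ⟨y, hy⟩ := hgsurj n; exact ⟨y, Subtype.ext hy⟩⟩
    let e : (M ⧸ LinearMap.ker f) ≃+ N :=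
      { e' with map_add' := fun a b => Subtype.ext (map_add g a b) }
    refine rank_eq_of_equiv_equiv (ZeroHom.mk ⇑σ (map_zero σ)) e σ.bijective ?_
    intro r m
    exact Subtype.ext (g.map_smulₛₗ r m)
  -- Step D: rank of `ker f` is zero.
  have h2 := Submodule.rank_quotient_add_rank (LinearMap.ker f)
  rw [hrq, h1] at h2
  have hker0 : Module.rank R (LinearMap.ker f) = 0 := by
    have := Cardinal.eq_of_add_eq_add_left
      (a := Module.rank R M) (b := Module.rank R (LinearMap.ker f)) (c := 0)
      (by rw [add_zero]; exact h2) (Module.rank_lt_aleph0 R M)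
    exact this
  -- Step E: since `M` is torsion-free, `ker f = ⊥`, i.e. `φ` is injective.
  rw [← hfφ, ← LinearMap.ker_eq_bot]
  rw [rank_eq_zero_iff] at hker0
  rw [Submodule.eq_bot_iff]
  intro x hx
  obtain ⟨a, ha, hax⟩ := hker0 ⟨x, hx⟩
  have : a • x = 0 := congrArg Subtype.val hax
  rcases smul_eq_zero.mp this with h | h
  · exact absurd h ha
  · exact h
end

section
/- Let B be a discrete valuation ring with normalized additive valuation v, and let χ : B^n → B^n be a B-linear endomorphism. Then the length of the B-module coker(χ) = B^n / im(χ) equals v(det χ), with the convention that both sides are infinite when det χ = 0. In particular, if det χ ≠ 0 then length_B(coker χ) = v(det χ). -/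
/-!
If `det χ ≠ 0` then `χ` is injective, and the Smith normal form gives bases of `B^n` and of
`im χ` in which the inclusion is diagonal with entries `aᵢ`. Hence `coker χ ≅ ∏ B ⧸ (aᵢ)`, whose
length is `∑ v(aᵢ) = v(∏ aᵢ) = v(det χ)`, as `det χ` and `∏ aᵢ` are associated.
If `det χ = 0`, a nonzero row vector `w` with `w χ = 0` and a coordinate `i` with `wᵢ ≠ 0` make
`b ↦ b eᵢ` an embedding of `B` into `coker χ`, and `B` has infinite length.
-/

/-- The length of a module, i.e. the Krull dimension of its lattice of submodules
(the supremum of the lengths of chains of submodules), valued in `WithBot ℕ∞`. -/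
noncomputable def moduleLength (B : Type*) [CommRing B] (C : Type*) [AddCommGroup C]
    [Module B C] : WithBot ℕ∞ :=
  Order.krullDim (Submodule B C)

open Module Submodule IsDiscreteValuationRing

theorem Submodule.associated_det_subtype_comp_prod_smithNormalFormCoeffs {ι R M : Type*}
    [Fintype ι] [CommRing R] [IsDomain R] [IsPrincipalIdealRing R] [AddCommGroup M]
    [Module R M] (N : Submodule R M) (e : M ≃ₗ[R] N) (b : Basis ι R M)
    (h : finrank R N = finrank R M) :
    Associated (LinearMap.det (N.subtype ∘ₗ (e : M →ₗ[R] N)))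
      (∏ i, smithNormalFormCoeffs b h i) := by
  classical
  let b' := smithNormalFormTopBasis b h
  let f := N.subtype ∘ₗ (b'.equiv (smithNormalFormBotBasis b h) (Equiv.refl ι) : M →ₗ[R] N)
  have hdiag : LinearMap.toMatrix b' b' f = Matrix.diagonal (smithNormalFormCoeffs b h) := by
    ext i j
    simp only [LinearMap.toMatrix_apply, LinearMap.coe_comp, coe_subtype, LinearEquiv.coe_coe,
      Function.comp_apply, Basis.equiv_apply, Equiv.refl_apply, smithNormalFormBotBasis_def,
      map_smul, Basis.repr_self, Finsupp.smul_single, smul_eq_mul, mul_one,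
      Finsupp.single_apply, eq_comm, Matrix.diagonal_apply, b', f]
    split_ifs with hij <;> simp [hij]
  calc Associated _ (LinearMap.det f) := LinearMap.associated_det_comp_equiv _ _ _
    _ = _ := by rw [← LinearMap.det_toMatrix b', hdiag, Matrix.det_diagonal]

theorem LinearMap.length_self_le_length_quotient_range_of_det_eq_zero {ι R : Type*} [Fintype ι]
    [DecidableEq ι] [CommRing R] [IsDomain R] {f : (ι → R) →ₗ[R] (ι → R)}
    (hf : LinearMap.det f = 0) : Module.length R R ≤ Module.length R ((ι → R) ⧸ range f) := by
  obtain ⟨w, hw0, hw⟩ := (Matrix.exists_vecMul_eq_zero_iff (M := toMatrix' f)).mpr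
    (by rwa [det_toMatrix'])
  obtain ⟨i, hi⟩ : ∃ i, w i ≠ 0 := Function.ne_iff.mp hw0
  have hw_range : ∀ y, w ⬝ᵥ f y = 0 := fun y => by
    rw [← Matrix.toLin'_toMatrix' f, Matrix.toLin'_apply, Matrix.dotProduct_mulVec, hw,
      zero_dotProduct]
  refine length_le_of_injective ((range f).mkQ ∘ₗ toSpanSingleton R _ (Pi.single i 1)) ?_
  refine (injective_iff_map_eq_zero _).mpr fun b hb => ?_
  obtain ⟨y, hy⟩ := (Submodule.Quotient.mk_eq_zero _).mp hb
  simpa [hy, dotProduct_single, hi] using hw_range y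

section DVR

variable {B : Type*} [CommRing B] [IsDomain B] [IsDiscreteValuationRing B]

theorem IsDiscreteValuationRing.addVal_prod {ι : Type*} (s : Finset ι) (a : ι → B) :
    addVal B (∏ i ∈ s, a i) = ∑ i ∈ s, addVal B (a i) := by
  classical
  induction s using Finset.induction_on with
  | empty => simp
  | insert i s hi ih => rw [Finset.prod_insert hi, Finset.sum_insert hi, addVal_mul, ih]

theorem Submodule.length_quotient_eq_addVal_det {M : Type*} [AddCommGroup M] [Module B M]
    [Module.Free B M] [Module.Finite B M] (N : Submodule B M) (e : M ≃ₗ[B] N) :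
    Module.length B (M ⧸ N) = addVal B (LinearMap.det (N.subtype ∘ₗ (e : M →ₗ[B] N))) := by
  let b := Module.Free.chooseBasis B M
  have h : finrank B N = finrank B M := e.finrank_eq.symm
  rw [(quotientEquivPiSpan N b h).length_eq, Module.length_pi_of_fintype,
    (addVal_eq_iff_associated _ _).mpr
      (associated_det_subtype_comp_prod_smithNormalFormCoeffs N e b h),
    addVal_prod]
  simp only [← Ring.ord_eq_addVal, Ring.ord]

theorem LinearMap.length_quotient_range_eq_addVal_det {M : Type*} [AddCommGroup M] [Module B M]
    [Module.Free B M] [Module.Finite B M] {f : M →ₗ[B] M} (hf : Function.Injective f) :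
    Module.length B (M ⧸ range f) = addVal B (LinearMap.det f) :=
  (range f).length_quotient_eq_addVal_det (LinearEquiv.ofInjective f hf)

end DVR

/-- Let `B` be a discrete valuation ring with normalized additive valuation
`v` and `χ : B^n → B^n` a `B`-linear endomorphism. Then the length of `coker χ` equals
`v(det χ)`, both sides being infinite when `det χ = 0`. -/
theorem length_coker_eq_addVal_det (B : Type*) [CommRing B] [IsDomain B]
    [IsDiscreteValuationRing B] (n : ℕ) (χ : (Fin n → B) →ₗ[B] (Fin n → B)) :
    moduleLength B ((Fin n → B) ⧸ LinearMap.range χ) =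
      ((IsDiscreteValuationRing.addVal B (LinearMap.det χ) : ℕ∞) : WithBot ℕ∞) := by
  rw [moduleLength, ← Module.coe_length, WithBot.coe_inj]
  by_cases hdet : LinearMap.det χ = 0
  · have hB : Module.length B B = ⊤ := by rw [← Ring.ord_zero, Ring.ord_eq_addVal, addVal_zero]
    rw [hdet, addVal_zero, ← top_le_iff, ← hB]
    exact χ.length_self_le_length_quotient_range_of_det_eq_zero hdet
  · have hinj : Function.Injective χ := by
      rw [← Matrix.toLin'_toMatrix' χ]
      exact Matrix.mulVec_injective_of_det_ne_zero (by rwa [LinearMap.det_toMatrix'])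
    exact χ.length_quotient_range_eq_addVal_det hinj
end

section
/- Let R be a commutative ring and M_1 →^α M_2 →^β M_3 → 0 an exact sequence of R-modules. Then for every n ≥ 1 the sequence M_1 ⊗_R Λ^{n−1} M_2 → Λ^n M_2 → Λ^n M_3 → 0 is exact, where the first map sends m ⊗ (x_1 ∧ ⋯ ∧ x_{n−1}) to α(m) ∧ x_1 ∧ ⋯ ∧ x_{n−1} and the second map is Λ^n β. -/
/-!
The wedges `α m ∧ y₁ ∧ ⋯ ∧ y_k` span a submodule `W` killed by `⋀ᵏ⁺¹ β`. Conversely, modulo `W`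
the alternating map `v ↦ v₀ ∧ ⋯ ∧ v_k` vanishes as soon as some `vᵢ ∈ ker β = range α`, hence
(expanding multilinearly) depends only on `β ∘ v`. It therefore descends along the surjection `β`
to an alternating map on `M₃`, and the induced linear map `⋀ᵏ⁺¹ M₃ → ⋀ᵏ⁺¹ M₂ ⧸ W` composed with
`⋀ᵏ⁺¹ β` is the quotient map, so `ker ⋀ᵏ⁺¹ β ⊆ W`.
-/

/-- The image of the `n`-th exterior power under the algebra map induced by a linear map. -/
theorem extMap_mem {R : Type*} [CommRing R] {M N : Type*} [AddCommGroup M] [Module R M]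
    [AddCommGroup N] [Module R N] (n : ℕ) (f : M →ₗ[R] N) {x : ExteriorAlgebra R M}
    (hx : x ∈ ⋀[R]^n M) : ExteriorAlgebra.map f x ∈ ⋀[R]^n N := by
  rw [← ExteriorAlgebra.ιMulti_span_fixedDegree] at hx ⊢
  refine Submodule.span_induction ?_ ?_ ?_ ?_ hx
  · rintro x ⟨v, rfl⟩
    rw [ExteriorAlgebra.map_apply_ιMulti]
    exact Submodule.subset_span ⟨f ∘ v, rfl⟩
  · simp
  · intro x y _ _ hx hy
    rw [map_add]
    exact Submodule.add_mem _ hx hy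
  · intro r x _ hx
    rw [map_smul]
    exact Submodule.smul_mem _ r hx

/-- The linear map `⋀[R]^n M → ⋀[R]^n N` functorially induced by a linear map `f : M → N`;
it sends `x₁ ∧ ⋯ ∧ xₙ` to `f x₁ ∧ ⋯ ∧ f xₙ`. -/
noncomputable def extPowMap {R : Type*} [CommRing R] {M N : Type*} [AddCommGroup M] [Module R M]
    [AddCommGroup N] [Module R N] (n : ℕ) (f : M →ₗ[R] N) : ⋀[R]^n M →ₗ[R] ⋀[R]^n N :=
  (ExteriorAlgebra.map f).toLinearMap.restrict fun x hx => extMap_mem n f hx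

/-- The wedge product `v 0 ∧ ⋯ ∧ v (n-1)` as an element of the `n`-th exterior power. -/
noncomputable def wedgeProd (R : Type*) [CommRing R] {M : Type*} [AddCommGroup M] [Module R M]
    (n : ℕ) (v : Fin n → M) : ⋀[R]^n M :=
  ⟨ExteriorAlgebra.ιMulti R n v, ExteriorAlgebra.ιMulti_range R n (Set.mem_range_self v)⟩

section

variable {R : Type*} [CommRing R] {M N : Type*} [AddCommGroup M] [Module R M]
  [AddCommGroup N] [Module R N]

theorem wedgeProd_eq_ιMulti (n : ℕ) (v : Fin n → M) :
    wedgeProd R n v = exteriorPower.ιMulti R n v :=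
  rfl

theorem extPowMap_eq_map (n : ℕ) (f : M →ₗ[R] N) :
    extPowMap n f = exteriorPower.map n f := by
  ext v
  simp only [LinearMap.compAlternatingMap_apply, exteriorPower.map_apply_ιMulti]
  exact ExteriorAlgebra.map_apply_ιMulti f v

end

namespace AlternatingMap

variable {R : Type*} [CommRing R] {M N P ι : Type*} [AddCommGroup M] [Module R M]
  [AddCommGroup N] [Module R N] [AddCommGroup P] [Module R P] [Fintype ι]

/-- Expanding `H v = H (w + (v - w))` multilinearly, every term but `H w` has an argument
`v i - w i ∈ ker f`. -/
theorem map_eq_of_comp_eq (H : M [⋀^ι]→ₗ[R] P) {f : M →ₗ[R] N}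
    (hH : ∀ v i, f (v i) = 0 → H v = 0) {v w : ι → M} (h : f ∘ v = f ∘ w) : H v = H w := by
  classical
  have hker : ∀ i, f ((v - w) i) = 0 := fun i => by
    simpa [sub_eq_zero] using congrFun h i
  calc H v = H (w + (v - w)) := by rw [add_sub_cancel]
    _ = ∑ s : Finset ι, H (s.piecewise w (v - w)) := H.toMultilinearMap.map_add_univ _ _
    _ = H w := by
      rw [Finset.sum_eq_single Finset.univ, Finset.piecewise_univ]
      · intro s _ hs
        obtain ⟨i, hi⟩ := by simpa [Finset.eq_univ_iff_forall] using hs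
        exact hH _ i (by rw [Finset.piecewise_eq_of_notMem _ _ _ hi]; exact hker i)
      · simp

noncomputable def descend (H : M [⋀^ι]→ₗ[R] P) {f : M →ₗ[R] N} (hf : Function.Surjective f)
    (hH : ∀ v i, f (v i) = 0 → H v = 0) : N [⋀^ι]→ₗ[R] P where
  toFun u := H (Function.surjInv hf ∘ u)
  map_update_add' u i x y := by
    simp only [Function.comp_update, ← H.map_update_add]
    refine H.map_eq_of_comp_eq hH ?_
    simp [Function.comp_update, Function.surjInv_eq]
  map_update_smul' u i r x := by
    simp only [Function.comp_update, ← H.map_update_smul]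
    refine H.map_eq_of_comp_eq hH ?_
    simp [Function.comp_update, Function.surjInv_eq]
  map_eq_zero_of_eq' u i j hij hne := H.map_eq_zero_of_eq _ (by simp [hij]) hne

theorem descend_apply_comp (H : M [⋀^ι]→ₗ[R] P) {f : M →ₗ[R] N}
    (hf : Function.Surjective f) (hH : ∀ v i, f (v i) = 0 → H v = 0) (v : ι → M) :
    H.descend hf hH (f ∘ v) = H v :=
  H.map_eq_of_comp_eq hH (by ext; simp [Function.surjInv_eq])

end AlternatingMap

namespace exteriorPower

variable {R : Type*} [CommRing R] {M N : Type*} [AddCommGroup M] [Module R M]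
  [AddCommGroup N] [Module R N]

theorem ιMulti_mem_span_cons {n : ℕ} (K : Submodule R M) {v : Fin (n + 1) → M} {i : Fin (n + 1)}
    (hi : v i ∈ K) :
    ιMulti R (n + 1) v ∈ Submodule.span R
      {z | ∃ x ∈ K, ∃ y : Fin n → M, z = ιMulti R (n + 1) (Fin.cons x y)} := by
  rcases eq_or_ne i 0 with rfl | hi0
  · exact Submodule.subset_span ⟨v 0, hi, Fin.tail v, by rw [Fin.cons_self_tail]⟩
  · rw [← neg_neg (ιMulti R (n + 1) v), ← (ιMulti R (n + 1)).map_swap v hi0.symm]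
    refine Submodule.neg_mem _ (Submodule.subset_span ⟨v i, hi, Fin.tail (v ∘ Equiv.swap 0 i), ?_⟩)
    rw [← Fin.cons_self_tail (v ∘ Equiv.swap 0 i)]
    simp

theorem ker_map_of_surjective (n : ℕ) {f : M →ₗ[R] N} (hf : Function.Surjective f) :
    LinearMap.ker (map (n + 1) f) = Submodule.span R
      {z | ∃ x ∈ LinearMap.ker f, ∃ y : Fin n → M, z = ιMulti R (n + 1) (Fin.cons x y)} := by
  set W := Submodule.span R
    {z | ∃ x ∈ LinearMap.ker f, ∃ y : Fin n → M, z = ιMulti R (n + 1) (Fin.cons x y)}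
  refine le_antisymm ?_ (Submodule.span_le.mpr ?_)
  · let H := W.mkQ.compAlternatingMap (ιMulti R (n + 1))
    have hH : ∀ v i, f (v i) = 0 → H v = 0 := fun v i hi =>
      (Submodule.Quotient.mk_eq_zero W).mpr (ιMulti_mem_span_cons _ hi)
    have hfactor : alternatingMapLinearEquiv (H.descend hf hH) ∘ₗ map (n + 1) f = W.mkQ := by
      ext v
      simp [AlternatingMap.descend_apply_comp, H]
    simpa [hfactor] using LinearMap.ker_le_ker_comp (map (n + 1) f)
      (alternatingMapLinearEquiv (H.descend hf hH))
  · rintro _ ⟨x, hx, y, rfl⟩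
    rw [SetLike.mem_coe, LinearMap.mem_ker, map_apply_ιMulti]
    exact (ιMulti R (n + 1)).map_coord_zero 0 (by simpa using hx)

end exteriorPower

/-- If `M₁ →α M₂ →β M₃ → 0` is exact, then for `n = k+1 ≥ 1` the sequence
`M₁ ⊗ Λ^k M₂ → Λ^{k+1} M₂ → Λ^{k+1} M₃ → 0` is exact: `Λ^{k+1} β` is surjective and its
kernel is the image of the first map, i.e. the span of the elements `α(m) ∧ x₁ ∧ ⋯ ∧ x_k`. -/
theorem exteriorPower_right_exact (R : Type*) [CommRing R] (M₁ M₂ M₃ : Type*)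
    [AddCommGroup M₁] [Module R M₁] [AddCommGroup M₂] [Module R M₂]
    [AddCommGroup M₃] [Module R M₃]
    (α : M₁ →ₗ[R] M₂) (β : M₂ →ₗ[R] M₃)
    (hsurj : Function.Surjective β) (hexact : LinearMap.range α = LinearMap.ker β) (k : ℕ) :
    Function.Surjective (extPowMap (k+1) β) ∧
    LinearMap.ker (extPowMap (k+1) β) =
      Submodule.span R {z : ⋀[R]^(k+1) M₂ | ∃ (m : M₁) (y : Fin k → M₂),
        z = wedgeProd R (k+1) (Fin.cons (α m) y)} := by
  rw [extPowMap_eq_map]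
  refine ⟨exteriorPower.map_surjective hsurj, ?_⟩
  rw [exteriorPower.ker_map_of_surjective k hsurj, ← hexact]
  simp only [LinearMap.mem_range, exists_exists_eq_and, wedgeProd_eq_ιMulti]
end

section
/- Let R be a commutative ring, M_1 →^α M_2 →^π M_3 → 0 an exact sequence of R-modules, N an R-module, and n ≥ 1. Let φ : M_2^n → N be an alternating R-multilinear map. Then φ factors as φ = ψ ∘ π^n for an (automatically unique and alternating) R-multilinear map ψ : M_3^n → N if and only if φ(α(m), x_2, …, x_n) = 0 for all m ∈ M_1 and x_2, …, x_n ∈ M_2. Consequently, precomposition with π induces an isomorphism from the module of alternating n-multilinear maps M_3^n → N onto the submodule of alternating maps M_2^n → N vanishing whenever the first argument lies in the image of α. -/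
/-- Let `M₁ →α M₂ →π M₃ → 0` be exact, `N` an `R`-module and `n = k+1 ≥ 1`.
An alternating multilinear map `φ : M₂ⁿ → N` factors (necessarily uniquely, through an
alternating map) as `φ = ψ ∘ πⁿ` if and only if `φ(α m, x₂, …, xₙ) = 0` for all `m, xᵢ`. -/
theorem alternatingMap_factors_iff (R : Type*) [CommRing R] (M₁ M₂ M₃ N : Type*)
    [AddCommGroup M₁] [Module R M₁] [AddCommGroup M₂] [Module R M₂]
    [AddCommGroup M₃] [Module R M₃] [AddCommGroup N] [Module R N]
    (α : M₁ →ₗ[R] M₂) (π : M₂ →ₗ[R] M₃)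
    (hπ : Function.Surjective π) (hexact : LinearMap.range α = LinearMap.ker π)
    (k : ℕ) (φ : M₂ [⋀^Fin (k+1)]→ₗ[R] N) :
    (∃! ψ : M₃ [⋀^Fin (k+1)]→ₗ[R] N, φ = ψ.compLinearMap π) ↔
      ∀ (m : M₁) (x : Fin k → M₂), φ (Fin.cons (α m) x) = 0 := by
  classical
  constructor
  · rintro ⟨ψ, rfl, -⟩ m x
    have h0 : π (α m) = 0 := by
      have : α m ∈ LinearMap.ker π := hexact ▸ LinearMap.mem_range_self α m
      simpa using this
    simp only [AlternatingMap.compLinearMap_apply]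
    have he : (fun i => π ((Fin.cons (α m) x : Fin (k+1) → M₂) i)) =
        Function.update (fun i => π ((Fin.cons (α m) x : Fin (k+1) → M₂) i)) 0 (0 : M₃) := by
      funext i
      rcases eq_or_ne i 0 with rfl | hi
      · simp [h0]
      · rw [Function.update_of_ne hi]
    rw [he]
    exact ψ.map_update_zero _ _
  · intro h
    -- φ vanishes whenever some argument lies in ker π
    have hker : ∀ (x : Fin (k+1) → M₂) (i : Fin (k+1)), π (x i) = 0 → φ x = 0 := by
      intro x i hi
      obtain ⟨m, hm⟩ : x i ∈ LinearMap.range α := by rw [hexact]; exact hi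
      set σ : Equiv.Perm (Fin (k+1)) := Equiv.swap i 0 with hσ
      have hxs : φ (x ∘ σ) = 0 := by
        have hc : (Fin.cons (α m) (Fin.tail (x ∘ σ)) : Fin (k+1) → M₂) = x ∘ σ := by
          funext j
          refine Fin.cases ?_ (fun j => ?_) j
          · simp [hσ, Equiv.swap_apply_right, hm]
          · simp [Fin.tail]
        rw [← hc]
        exact h m _
      have hp := φ.map_perm (x ∘ σ) σ
      have hσσ : (x ∘ σ) ∘ σ = x := by funext j; simp [hσ]
      rw [hσσ, hxs, smul_zero] at hp
      exact hp
    -- replacing one coordinate by another with the same image under π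
    have hupd : ∀ (x : Fin (k+1) → M₂) (i : Fin (k+1)) (y : M₂),
        π y = π (x i) → φ (Function.update x i y) = φ x := by
      intro x i y hy
      have h1 : φ (Function.update x i (y - x i)) = 0 := by
        refine hker _ i ?_
        simp [hy]
      have h2 := φ.map_update_sub x i y (x i)
      rw [h1, Function.update_eq_self] at h2
      exact sub_eq_zero.mp h2.symm
    -- full invariance: φ only depends on the images under π
    have hinv : ∀ x x' : Fin (k+1) → M₂, (∀ i, π (x i) = π (x' i)) → φ x = φ x' := by
      intro x x' hxx
      have key : ∀ s : Finset (Fin (k+1)), ∀ x' : Fin (k+1) → M₂,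
          (∀ i, π (x i) = π (x' i)) → (∀ i ∉ s, x i = x' i) → φ x = φ x' := by
        intro s
        induction s using Finset.induction_on with
        | empty =>
          intro x' _ hagree
          congr 1
          funext i
          exact hagree i (by simp)
        | @insert a s ha ih =>
          intro x' hπe hagree
          have h1 : φ x = φ (Function.update x' a (x a)) := by
            refine ih _ (fun i => ?_) (fun i hi => ?_)
            · rcases eq_or_ne i a with rfl | hia
              · simp
              · rw [Function.update_of_ne hia]; exact hπe i
            · rcases eq_or_ne i a with rfl | hia
              · simp
              · rw [Function.update_of_ne hia]
                exact hagree i (by simp [hia, hi])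
          rw [h1, hupd x' a (x a) (hπe a)]
      exact key Finset.univ x' hxx (fun i hi => absurd (Finset.mem_univ i) hi)
    -- a set-theoretic section of π
    set s : M₃ → M₂ := Function.surjInv hπ with hsdef
    have hs : ∀ y, π (s y) = y := fun y => Function.surjInv_eq hπ y
    -- key computation for updates
    have hkey : ∀ (y : Fin (k+1) → M₃) (i : Fin (k+1)) (v : M₃) (w : M₂), π w = v →
        φ (fun j => s (Function.update y i v j)) =
          φ (Function.update (fun j => s (y j)) i w) := by
      intro y i v w hw
      refine hinv _ _ (fun j => ?_)
      rcases eq_or_ne j i with rfl | hj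
      · simp [hs, hw]
      · rw [Function.update_of_ne hj, Function.update_of_ne hj]
    -- construct ψ
    let ψ₀ : MultilinearMap R (fun _ : Fin (k+1) => M₃) N :=
      { toFun := fun y => φ (fun i => s (y i))
        map_update_add' := by
          intro inst y i a b
          obtain rfl : inst = instDecidableEqFin (k+1) := Subsingleton.elim _ _
          show φ (fun j => s (Function.update y i (a + b) j)) =
            φ (fun j => s (Function.update y i a j)) + φ (fun j => s (Function.update y i b j))
          rw [hkey y i (a + b) (s a + s b) (by simp [hs]), hkey y i a (s a) (hs a),
            hkey y i b (s b) (hs b)]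
          exact φ.map_update_add _ i (s a) (s b)
        map_update_smul' := by
          intro inst y i c a
          obtain rfl : inst = instDecidableEqFin (k+1) := Subsingleton.elim _ _
          show φ (fun j => s (Function.update y i (c • a) j)) =
            c • φ (fun j => s (Function.update y i a j))
          rw [hkey y i (c • a) (c • s a) (by simp [hs]), hkey y i a (s a) (hs a)]
          exact φ.map_update_smul _ i c (s a) }
    let ψ : M₃ [⋀^Fin (k+1)]→ₗ[R] N :=
      { toMultilinearMap := ψ₀
        map_eq_zero_of_eq' := by
          intro y i j hij hne
          exact φ.map_eq_zero_of_eq _ (show s (y i) = s (y j) from congrArg s hij) hne }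
    have hfac : φ = ψ.compLinearMap π := by
      ext x
      simp only [AlternatingMap.compLinearMap_apply]
      show φ x = φ (fun i => s (π (x i)))
      exact hinv _ _ (fun i => by simp [hs])
    refine ⟨ψ, hfac, fun ψ' hψ' => ?_⟩
    exact AlternatingMap.compLinearMap_injective π hπ (hψ'.symm.trans hfac)
end
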